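/- arXiv:2211.00863 — 2 statements merged into one kernel-verified Lean document; each statement's English description precedes it below -/
import Mathlib

section
/- Let S and A be nonempty finite types, T : S → A → PMF S a transition kernel, r : S → A → ℝ a reward function with 0 ≤ r(s,a) ≤ R_max for all s, a, and γ ∈ [0,1) a discount factor. Let π₁, π₂ : S → PMF A be two policies and V₁, V₂ : S → ℝ satisfy the respective Bellman equations, i.e. Vᵢ(s) = Σ_a πᵢ(s)(a) · ( r(s,a) + γ · Σ_{s'} T(s,a)(s') · Vᵢ(s') ) for all s and i ∈ {1,2}. Then for every state s, |V₁(s) − V₂(s)| ≤ (R_max / (1 − γ)²) · sup_{s'} Σ_a |π₁(s')(a) − π₂(s')(a)|; equivalently, since the total variation distance satisfies D_TV(π₁(s'), π₂(s')) = (1/2) Σ_a |π₁(s')(a) − π₂(s')(a)|, |V₁(s) − V₂(s)| ≤ (2 R_max / (1 − γ)²) · sup_{s'} D_TV(π₁(s'), π₂(s')). -/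
/-!
In the sup norm `‖·‖` on `S → ℝ`, the Bellman equation gives `‖V‖ ≤ Rmax + γ ‖V‖`, hence
`‖V‖ ≤ Rmax / (1 - γ)`, and every action value `Q(s, a)` obeys the same bound. Splitting
`V₁ s - V₂ s = ∑ₐ (π₁ - π₂)(a) Q₁(s, a) + ∑ₐ π₂(a) (Q₁ - Q₂)(s, a)` and using
`|Q₁ - Q₂| ≤ γ ‖V₁ - V₂‖` yields `‖V₁ - V₂‖ ≤ Rmax / (1 - γ) · D + γ ‖V₁ - V₂‖`, where `D` is the
largest `ℓ¹` distance between the two policies; solving for `‖V₁ - V₂‖` gives the factor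
`(1 - γ)⁻²`.
-/

namespace PMF

variable {α : Type*} [Fintype α]

theorem sum_toReal_eq_one (p : PMF α) : ∑ a, (p a).toReal = 1 := by
  rw [← ENNReal.toReal_sum fun a _ => p.apply_ne_top a, ← tsum_fintype (L := .unconditional _),
    p.tsum_coe, ENNReal.toReal_one]

theorem abs_sum_toReal_mul_le (p : PMF α) {f : α → ℝ} {c : ℝ} (hf : ∀ a, |f a| ≤ c) :
    |∑ a, (p a).toReal * f a| ≤ c :=
  calc |∑ a, (p a).toReal * f a| ≤ ∑ a, (p a).toReal * |f a| := by
        refine (Finset.abs_sum_le_sum_abs _ _).trans_eq ?_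
        simp_rw [abs_mul, ENNReal.abs_toReal]
    _ ≤ ∑ a, (p a).toReal * c := by gcongr with a; exact hf a
    _ = c := by rw [← Finset.sum_mul, p.sum_toReal_eq_one, one_mul]

theorem abs_sum_toReal_mul_sub_sum_toReal_mul_le (p q : PMF α) {f g : α → ℝ} {C D : ℝ}
    (hf : ∀ a, |f a| ≤ C) (hfg : ∀ a, |f a - g a| ≤ D) :
    |∑ a, (p a).toReal * f a - ∑ a, (q a).toReal * g a| ≤
      (∑ a, |(p a).toReal - (q a).toReal|) * C + D := by
  have hsplit : ∑ a, (p a).toReal * f a - ∑ a, (q a).toReal * g a =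
      ∑ a, ((p a).toReal - (q a).toReal) * f a + ∑ a, (q a).toReal * (f a - g a) := by
    simp only [sub_mul, mul_sub, Finset.sum_sub_distrib]
    ring
  rw [hsplit, Finset.sum_mul]
  refine (abs_add_le _ _).trans (add_le_add ?_ (q.abs_sum_toReal_mul_le hfg))
  refine (Finset.abs_sum_le_sum_abs _ _).trans (Finset.sum_le_sum fun a _ => ?_)
  rw [abs_mul]
  exact mul_le_mul_of_nonneg_left (hf a) (abs_nonneg _)

end PMF

theorem abs_apply_le_pi_norm {ι : Type*} [Fintype ι] (f : ι → ℝ) (i : ι) : |f i| ≤ ‖f‖ :=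
  (Real.norm_eq_abs (f i)).symm.trans_le (norm_le_pi_norm f i)

theorem le_div_one_sub_of_le_add_mul {x c γ : ℝ} (hγ : γ < 1) (h : x ≤ c + γ * x) :
    x ≤ c / (1 - γ) := by
  rw [le_div_iff₀ (sub_pos.mpr hγ)]
  linarith

section DiscountedMDP

variable {S A : Type*} [Fintype S]

def qValue (T : S → A → PMF S) (r : S → A → ℝ) (γ : ℝ) (V : S → ℝ) (s : S) (a : A) : ℝ :=
  r s a + γ * ∑ s', (T s a s').toReal * V s'

variable {T : S → A → PMF S} {r : S → A → ℝ} {γ Rmax : ℝ}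

theorem abs_qValue_le (hγ : 0 ≤ γ) (hr : ∀ s a, |r s a| ≤ Rmax) (V : S → ℝ) (s : S) (a : A) :
    |qValue T r γ V s a| ≤ Rmax + γ * ‖V‖ :=
  calc |qValue T r γ V s a| ≤ |r s a| + γ * |∑ s', (T s a s').toReal * V s'| :=
        (abs_add_le _ _).trans_eq (by rw [abs_mul, abs_of_nonneg hγ])
    _ ≤ Rmax + γ * ‖V‖ := by
        gcongr
        · exact hr s a
        · exact (T s a).abs_sum_toReal_mul_le (abs_apply_le_pi_norm V)

theorem abs_qValue_sub_qValue_le (hγ : 0 ≤ γ) (V₁ V₂ : S → ℝ) (s : S) (a : A) :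
    |qValue T r γ V₁ s a - qValue T r γ V₂ s a| ≤ γ * ‖V₁ - V₂‖ := by
  have hdiff : qValue T r γ V₁ s a - qValue T r γ V₂ s a =
      γ * ∑ s', (T s a s').toReal * (V₁ - V₂) s' := by
    simp only [qValue, Pi.sub_apply, mul_sub, Finset.sum_sub_distrib]
    ring
  rw [hdiff, abs_mul, abs_of_nonneg hγ]
  exact mul_le_mul_of_nonneg_left
    ((T s a).abs_sum_toReal_mul_le (abs_apply_le_pi_norm (V₁ - V₂))) hγ

variable [Fintype A] {pol pol₁ pol₂ : S → PMF A} {V V₁ V₂ : S → ℝ}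

theorem norm_le_of_bellman (hγ0 : 0 ≤ γ) (hγ1 : γ < 1) (hR : 0 ≤ Rmax)
    (hr : ∀ s a, |r s a| ≤ Rmax)
    (hV : ∀ s, V s = ∑ a, (pol s a).toReal * qValue T r γ V s a) :
    ‖V‖ ≤ Rmax / (1 - γ) := by
  refine le_div_one_sub_of_le_add_mul hγ1 ((pi_norm_le_iff_of_nonneg (by positivity)).2 ?_)
  intro s
  rw [Real.norm_eq_abs, hV s]
  exact (pol s).abs_sum_toReal_mul_le (abs_qValue_le hγ0 hr V s)

theorem abs_qValue_le_of_bellman (hγ0 : 0 ≤ γ) (hγ1 : γ < 1) (hR : 0 ≤ Rmax)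
    (hr : ∀ s a, |r s a| ≤ Rmax)
    (hV : ∀ s, V s = ∑ a, (pol s a).toReal * qValue T r γ V s a) (s : S) (a : A) :
    |qValue T r γ V s a| ≤ Rmax / (1 - γ) :=
  calc |qValue T r γ V s a| ≤ Rmax + γ * (Rmax / (1 - γ)) :=
        (abs_qValue_le hγ0 hr V s a).trans (by gcongr; exact norm_le_of_bellman hγ0 hγ1 hR hr hV)
    _ = Rmax / (1 - γ) := by
        field_simp [(sub_pos.mpr hγ1).ne']
        ring

theorem norm_sub_le_of_bellman (hγ0 : 0 ≤ γ) (hγ1 : γ < 1) (hR : 0 ≤ Rmax)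
    (hr : ∀ s a, |r s a| ≤ Rmax)
    (hV₁ : ∀ s, V₁ s = ∑ a, (pol₁ s a).toReal * qValue T r γ V₁ s a)
    (hV₂ : ∀ s, V₂ s = ∑ a, (pol₂ s a).toReal * qValue T r γ V₂ s a) :
    ‖V₁ - V₂‖ ≤
      Rmax / (1 - γ) ^ 2 * ⨆ s, ∑ a, |(pol₁ s a).toReal - (pol₂ s a).toReal| := by
  set D := ⨆ s, ∑ a, |(pol₁ s a).toReal - (pol₂ s a).toReal|
  have hD : ∀ s, ∑ a, |(pol₁ s a).toReal - (pol₂ s a).toReal| ≤ D :=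
    le_ciSup (Finite.bddAbove_range _)
  have hD0 : 0 ≤ D := Real.iSup_nonneg fun s => Finset.sum_nonneg fun a _ => abs_nonneg _
  have hcontract : ‖V₁ - V₂‖ ≤ Rmax / (1 - γ) * D + γ * ‖V₁ - V₂‖ := by
    refine (pi_norm_le_iff_of_nonneg (by positivity)).2 fun s => ?_
    rw [Pi.sub_apply, Real.norm_eq_abs, hV₁ s, hV₂ s]
    calc _ ≤ (∑ a, |(pol₁ s a).toReal - (pol₂ s a).toReal|) * (Rmax / (1 - γ)) +
            γ * ‖V₁ - V₂‖ :=
          (pol₁ s).abs_sum_toReal_mul_sub_sum_toReal_mul_le (pol₂ s)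
            (abs_qValue_le_of_bellman hγ0 hγ1 hR hr hV₁ s)
            (abs_qValue_sub_qValue_le hγ0 V₁ V₂ s)
      _ ≤ Rmax / (1 - γ) * D + γ * ‖V₁ - V₂‖ := by
          rw [mul_comm]
          gcongr
          exact hD s
  calc ‖V₁ - V₂‖ ≤ Rmax / (1 - γ) * D / (1 - γ) := le_div_one_sub_of_le_add_mul hγ1 hcontract
    _ = Rmax / (1 - γ) ^ 2 * D := by rw [sq, ← div_div]; ring

end DiscountedMDP

theorem value_difference_le_total_variation_general
    {S A : Type*} [Fintype S] [Fintype A]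
    (T : S → A → PMF S)
    (pol₁ pol₂ : S → PMF A)
    (r : S → A → ℝ) (Rmax : ℝ)
    (hr : ∀ s a, 0 ≤ r s a ∧ r s a ≤ Rmax)
    (γ : ℝ) (hγ0 : 0 ≤ γ) (hγ1 : γ < 1)
    (V₁ V₂ : S → ℝ)
    (hV₁ : ∀ s, V₁ s = ∑ a, (pol₁ s a).toReal *
        (r s a + γ * ∑ s', (T s a s').toReal * V₁ s'))
    (hV₂ : ∀ s, V₂ s = ∑ a, (pol₂ s a).toReal *
        (r s a + γ * ∑ s', (T s a s').toReal * V₂ s')) :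
    ∀ s,
      (|V₁ s - V₂ s| ≤
        (Rmax / (1 - γ)^2) *
          (⨆ s' : S, ∑ a, |(pol₁ s' a).toReal - (pol₂ s' a).toReal|)) ∧
      (|V₁ s - V₂ s| ≤
        (2 * Rmax / (1 - γ)^2) *
          (⨆ s' : S, (1/2) * ∑ a, |(pol₁ s' a).toReal - (pol₂ s' a).toReal|)) := by
  intro s
  -- `A` is inhabited because `pol₁ s` is a probability mass function on it.
  obtain ⟨a, -⟩ := (pol₁ s).support_nonempty
  have hR : 0 ≤ Rmax := (hr s a).1.trans (hr s a).2
  have hr' : ∀ s a, |r s a| ≤ Rmax := fun s a => abs_le.2 ⟨by linarith [hr s a], (hr s a).2⟩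
  have hbound : |V₁ s - V₂ s| ≤
      Rmax / (1 - γ) ^ 2 * ⨆ s', ∑ a, |(pol₁ s' a).toReal - (pol₂ s' a).toReal| :=
    (abs_apply_le_pi_norm (V₁ - V₂) s).trans (norm_sub_le_of_bellman hγ0 hγ1 hR hr' hV₁ hV₂)
  refine ⟨hbound, hbound.trans_eq ?_⟩
  rw [← Real.mul_iSup_of_nonneg (by norm_num)]
  ring

/-- Lemma bounding the performance difference of two policies by the total
variation distance between them, with constant `2 Rmax / (1 - γ)²`. -/
theorem value_difference_le_total_variation
    {S A : Type*} [Fintype S] [Fintype A] [Nonempty S] [Nonempty A]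
    (T : S → A → PMF S)
    (pol₁ pol₂ : S → PMF A)
    (r : S → A → ℝ) (Rmax : ℝ)
    (hr : ∀ s a, 0 ≤ r s a ∧ r s a ≤ Rmax)
    (γ : ℝ) (hγ0 : 0 ≤ γ) (hγ1 : γ < 1)
    (V₁ V₂ : S → ℝ)
    (hV₁ : ∀ s, V₁ s = ∑ a, (pol₁ s a).toReal *
        (r s a + γ * ∑ s', (T s a s').toReal * V₁ s'))
    (hV₂ : ∀ s, V₂ s = ∑ a, (pol₂ s a).toReal *
        (r s a + γ * ∑ s', (T s a s').toReal * V₂ s')) :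
    ∀ s,
      (|V₁ s - V₂ s| ≤
        (Rmax / (1 - γ)^2) *
          (⨆ s' : S, ∑ a, |(pol₁ s' a).toReal - (pol₂ s' a).toReal|)) ∧
      (|V₁ s - V₂ s| ≤
        (2 * Rmax / (1 - γ)^2) *
          (⨆ s' : S, (1/2) * ∑ a, |(pol₁ s' a).toReal - (pol₂ s' a).toReal|)) :=
  value_difference_le_total_variation_general T pol₁ pol₂ r Rmax hr γ hγ0 hγ1 V₁ V₂ hV₁ hV₂
end

section
/- Let (Ω, 𝔽, P) be a probability space, 𝒳 a measurable space, X₁, X₂, … : Ω → 𝒳 a sequence of independent identically distributed random variables, and ψ : 𝒳 → ℝ^d a bounded measurable function. Let M = E[ψ(X₁) ψ(X₁)ᵀ] ∈ ℝ^{d×d} and Mₙ = (1/n) Σ_{k=1}^n ψ(X_k) ψ(X_k)ᵀ. Then: (i) almost surely, Mₙ converges to M entrywise as n → ∞; and (ii) for every ε > 0 that is not an eigenvalue of M, almost surely there exists N such that for all n ≥ N, the number of eigenvalues (counted with multiplicity) of the symmetric matrix Mₙ which are strictly greater than ε equals the number of eigenvalues of M strictly greater than ε. -/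
/-!
The entrywise convergence is the strong law of large numbers applied to each bounded product
`ψ i * ψ j`. For the eigenvalue count, fix a subsequence: the eigenvalue vectors of a convergent
sequence of symmetric matrices are bounded, so a further subsequence of them converges to some
`μ`. Passing to the limit in `det (x - Mₙ) = ∏ i, (x - λᵢ(Mₙ))` shows that `μ` is a rearrangement
of the eigenvalues of `M`. Since `ε` is none of them, the number of coordinates above `ε` is
eventually the same for the eigenvalue vectors and for `μ`, i.e. equal to that of `M`.
-/

open MeasureTheory ProbabilityTheory Filter
open scoped BigOperators

/-- The number of eigenvalues (with multiplicity) of a real symmetric matrix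
that are strictly greater than a threshold `ε`. -/
noncomputable def eigCountAbove {d : ℕ} {A : Matrix (Fin d) (Fin d) ℝ}
    (hA : A.IsHermitian) (ε : ℝ) : ℕ :=
  (Finset.univ.filter fun i => ε < hA.eigenvalues i).card

open Topology

namespace Matrix

open Polynomial

variable {n : Type*} [Fintype n] [DecidableEq n]

theorem IsHermitian.isBounded_range_eigenvalues {A : ℕ → Matrix n n ℝ}
    (hA : ∀ k, (A k).IsHermitian) {L : Matrix n n ℝ} (hAL : Tendsto A atTop (𝓝 L)) :
    Bornology.IsBounded (Set.range fun k => (hA k).eigenvalues) := by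
  let := Matrix.linftyOpNormedRing (n := n) (α := ℝ)
  let := Matrix.linftyOpNormedAlgebra (n := n) (R := ℝ) (α := ℝ)
  obtain ⟨R, hR0, hR⟩ := (Metric.isBounded_range_of_tendsto A hAL).exists_pos_norm_le
  refine isBounded_iff_forall_norm_le.2 ⟨R * ‖(1 : Matrix n n ℝ)‖, ?_⟩
  rintro _ ⟨k, rfl⟩
  refine pi_norm_le_iff_of_nonneg (by positivity) |>.2 fun i => ?_
  have := spectrum.subset_closedBall_norm_mul (A k) ((hA k).eigenvalues_mem_spectrum_real i)
  rw [mem_closedBall_zero_iff] at this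
  exact this.trans (by gcongr; exact hR _ ⟨k, rfl⟩)

theorem charpoly_eq_prod_of_tendsto_eigenvalues {A : ℕ → Matrix n n ℝ}
    (hA : ∀ k, (A k).IsHermitian) {L : Matrix n n ℝ} (hAL : Tendsto A atTop (𝓝 L))
    {μ : n → ℝ} (hμ : Tendsto (fun k => (hA k).eigenvalues) atTop (𝓝 μ)) :
    L.charpoly = ∏ i, (X - C (μ i)) := by
  refine Polynomial.funext fun x => tendsto_nhds_unique (f := fun k => (A k).charpoly.eval x)
    (l := atTop) ?_ ?_
  · simp_rw [eval_charpoly]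
    exact ((continuous_const.sub continuous_id).matrix_det.tendsto L).comp hAL
  · simp_rw [(hA _).charpoly_eq, eval_prod, eval_sub, eval_X, eval_C]
    exact tendsto_finsetProd _ fun i _ => tendsto_const_nhds.sub (tendsto_pi_nhds.1 hμ i)

theorem IsHermitian.map_eigenvalues_eq_of_charpoly_eq {A : Matrix n n ℝ} (hA : A.IsHermitian)
    {μ : n → ℝ} (h : A.charpoly = ∏ i, (X - C (μ i))) :
    Finset.univ.val.map μ = Finset.univ.val.map hA.eigenvalues := by
  have := hA.roots_charpoly_eq_eigenvalues
  simpa [h, roots_prod, Finset.prod_ne_zero_iff, X_sub_C_ne_zero] using this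

end Matrix

open Finset

theorem Finset.card_filter_eq_of_map_eq {ι α : Type*} [Fintype ι] {f g : ι → α}
    (h : univ.val.map f = univ.val.map g) (p : α → Prop) [DecidablePred p] :
    #{i | p (f i)} = #{i | p (g i)} := by
  simpa [Multiset.countP_map, Finset.card_def] using congrArg (Multiset.countP p) h

theorem eventually_card_filter_lt_eq {ι : Type*} [Fintype ι] {v : ℕ → ι → ℝ} {μ : ι → ℝ}
    (hv : Tendsto v atTop (𝓝 μ)) {ε : ℝ} (hμ : ∀ i, μ i ≠ ε) :
    ∀ᶠ k in atTop, #{i | ε < v k i} = #{i | ε < μ i} := by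
  have hiff : ∀ᶠ k in atTop, ∀ i, (ε < v k i ↔ ε < μ i) := by
    refine eventually_all.2 fun i => ?_
    have hvi := tendsto_pi_nhds.1 hv i
    rcases (hμ i).lt_or_gt with hlt | hgt
    · filter_upwards [hvi.eventually_lt_const hlt] with k hk
      exact iff_of_false hk.le.not_gt hlt.le.not_gt
    · filter_upwards [hvi.eventually_const_lt hgt] with k hk
      exact iff_of_true hk hgt
  filter_upwards [hiff] with k hk
  exact congrArg card (filter_congr fun i _ => hk i)

theorem Matrix.IsHermitian.eventually_eigCountAbove_eq {d : ℕ}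
    {A : ℕ → Matrix (Fin d) (Fin d) ℝ} (hA : ∀ k, (A k).IsHermitian)
    {L : Matrix (Fin d) (Fin d) ℝ} (hL : L.IsHermitian) (hAL : Tendsto A atTop (𝓝 L))
    {ε : ℝ} (hε : ∀ i, hL.eigenvalues i ≠ ε) :
    ∀ᶠ k in atTop, eigCountAbove (hA k) ε = eigCountAbove hL ε := by
  refine tendsto_pure.1 <| tendsto_of_subseq_tendsto fun ns hns => ?_
  obtain ⟨μ, -, φ, hφ, hμ⟩ := tendsto_subseq_of_bounded
    (isBounded_range_eigenvalues hA hAL) fun k => Set.mem_range_self (ns k)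
  have hmap := hL.map_eigenvalues_eq_of_charpoly_eq <|
    charpoly_eq_prod_of_tendsto_eigenvalues (fun k => hA (ns (φ k)))
      (hAL.comp (hns.comp hφ.tendsto_atTop)) hμ
  have hμε : ∀ i, μ i ≠ ε := fun i => by
    obtain ⟨j, -, hj⟩ := Multiset.mem_map.1 (hmap ▸ Multiset.mem_map_of_mem μ (mem_univ_val i))
    exact hj ▸ hε j
  refine ⟨φ, tendsto_pure.2 ?_⟩
  filter_upwards [eventually_card_filter_lt_eq hμ hμε] with k hk
  exact hk.trans (card_filter_eq_of_map_eq hmap _)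

theorem ProbabilityTheory.ae_tendsto_average_comp {Ω 𝒳 : Type*} [MeasurableSpace Ω]
    [MeasurableSpace 𝒳] {P : Measure Ω} {X : ℕ → Ω → 𝒳} (hindep : iIndepFun X P)
    (hident : ∀ k, IdentDistrib (X k) (X 0) P P) {g : 𝒳 → ℝ} (hg : Measurable g)
    (hint : Integrable (fun ω => g (X 0 ω)) P) :
    ∀ᵐ ω ∂P, Tendsto (fun n : ℕ => (∑ k ∈ range n, g (X k ω)) / n) atTop
      (𝓝 (∫ ω, g (X 0 ω) ∂P)) :=
  strong_law_ae_real (fun k ω => g (X k ω)) hint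
    (fun _ _ hkl => (hindep.indepFun hkl).comp hg hg) fun k => (hident k).comp hg

theorem effective_dimension_consistent_general
    {Ω : Type*} [MeasurableSpace Ω] (P : Measure Ω) [IsProbabilityMeasure P]
    {𝒳 : Type*} [MeasurableSpace 𝒳]
    (X : ℕ → Ω → 𝒳)
    (hindep : iIndepFun X P)
    (hident : ∀ k, IdentDistrib (X k) (X 0) P P)
    {d : ℕ}
    (ψ : 𝒳 → Fin d → ℝ) (hψmeas : Measurable ψ)
    (C : ℝ) (hψbdd : ∀ x i, |ψ x i| ≤ C)
    (M : Matrix (Fin d) (Fin d) ℝ)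
    (hM : ∀ i j, M i j = ∫ ω, ψ (X 0 ω) i * ψ (X 0 ω) j ∂P)
    (Mn : ℕ → Ω → Matrix (Fin d) (Fin d) ℝ)
    (hMn : ∀ n ω i j,
      Mn n ω i j = (1/(n:ℝ)) * ∑ k ∈ Finset.range n, ψ (X k ω) i * ψ (X k ω) j)
    (hMherm : M.IsHermitian) (hMnherm : ∀ n ω, (Mn n ω).IsHermitian) :
    (∀ᵐ ω ∂P, ∀ i j,
        Tendsto (fun n => Mn n ω i j) atTop (nhds (M i j))) ∧
    (∀ ε : ℝ, 0 < ε → (∀ i, hMherm.eigenvalues i ≠ ε) →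
      ∀ᵐ ω ∂P, ∃ N, ∀ n ≥ N,
        eigCountAbove (hMnherm n ω) ε = eigCountAbove hMherm ε) := by
  have hconv : ∀ᵐ ω ∂P, ∀ i j, Tendsto (fun n => Mn n ω i j) atTop (𝓝 (M i j)) := by
    refine ae_all_iff.2 fun i => ae_all_iff.2 fun j => ?_
    have hg : Measurable fun x => ψ x i * ψ x j :=
      ((measurable_pi_apply i).comp hψmeas).mul ((measurable_pi_apply j).comp hψmeas)
    have hint : Integrable (fun ω => ψ (X 0 ω) i * ψ (X 0 ω) j) P :=
      .of_bound (hg.comp_aemeasurable (hident 0).aemeasurable_fst).aestronglyMeasurable (C * C)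
        (.of_forall fun ω => by
          rw [Real.norm_eq_abs, abs_mul]
          exact mul_le_mul (hψbdd _ i) (hψbdd _ j) (abs_nonneg _)
            ((abs_nonneg _).trans (hψbdd (X 0 ω) i)))
    filter_upwards [ae_tendsto_average_comp hindep hident hg hint] with ω hω
    simpa only [hMn, hM, one_div, inv_mul_eq_div] using hω
  refine ⟨hconv, fun ε _ hε => ?_⟩
  filter_upwards [hconv] with ω hω
  exact eventually_atTop.1 <| Matrix.IsHermitian.eventually_eigCountAbove_eq (hMnherm · ω) hMherm
    (tendsto_pi_nhds.2 fun i => tendsto_pi_nhds.2 (hω i)) hε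

/-- Lemma 1 of the paper: the empirical second-moment matrix of i.i.d.
bounded features converges entrywise almost surely to its population
counterpart, and consequently the empirical effective-dimension count (the
number of eigenvalues above a threshold `ε` that is not an eigenvalue of
the limit) is a consistent estimator of the population effective dimension. -/
theorem effective_dimension_consistent
    {Ω : Type*} [MeasurableSpace Ω] (P : Measure Ω) [IsProbabilityMeasure P]
    {𝒳 : Type*} [MeasurableSpace 𝒳]
    (X : ℕ → Ω → 𝒳) (hXmeas : ∀ k, Measurable (X k))
    (hindep : iIndepFun X P)
    (hident : ∀ k, IdentDistrib (X k) (X 0) P P)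
    {d : ℕ} (hd : 1 ≤ d)
    (ψ : 𝒳 → Fin d → ℝ) (hψmeas : Measurable ψ)
    (C : ℝ) (hψbdd : ∀ x i, |ψ x i| ≤ C)
    (M : Matrix (Fin d) (Fin d) ℝ)
    (hM : ∀ i j, M i j = ∫ ω, ψ (X 0 ω) i * ψ (X 0 ω) j ∂P)
    (Mn : ℕ → Ω → Matrix (Fin d) (Fin d) ℝ)
    (hMn : ∀ n ω i j,
      Mn n ω i j = (1/(n:ℝ)) * ∑ k ∈ Finset.range n, ψ (X k ω) i * ψ (X k ω) j)
    (hMherm : M.IsHermitian) (hMnherm : ∀ n ω, (Mn n ω).IsHermitian) :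
    (∀ᵐ ω ∂P, ∀ i j,
        Tendsto (fun n => Mn n ω i j) atTop (nhds (M i j))) ∧
    (∀ ε : ℝ, 0 < ε → (∀ i, hMherm.eigenvalues i ≠ ε) →
      ∀ᵐ ω ∂P, ∃ N, ∀ n ≥ N,
        eigCountAbove (hMnherm n ω) ε = eigCountAbove hMherm ε) :=
  effective_dimension_consistent_general P X hindep hident ψ hψmeas C hψbdd M hM Mn hMn hMherm
    hMnherm
end
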